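/- arXiv:2206.00196 — 3 statements merged into one kernel-verified Lean document; each statement's English description precedes it below -/
import Mathlib

section
/- For every u ∈ H(Ω), ∫_Ω (K_H(x)∇u|∇u) dx = ∫_Ω q² (K_H(x)∇(u/q)|∇(u/q)) dx. -/
open MeasureTheory Real Filter Topology Set

noncomputable section

/-- The bilinear form `(K_H(x) a | b)` associated with the matrix
`K_H(x) = (k²+|x|²)⁻¹ [[k²+x₂², -x₁x₂],[-x₁x₂, k²+x₁²]]`. -/
def KHform (k : ℝ) (x a b : ℝ × ℝ) : ℝ :=
  (k ^ 2 + x.1 ^ 2 + x.2 ^ 2)⁻¹ *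
    ((k ^ 2 + x.2 ^ 2) * a.1 * b.1 - x.1 * x.2 * a.1 * b.2
      - x.1 * x.2 * a.2 * b.1 + (k ^ 2 + x.1 ^ 2) * a.2 * b.2)

/-- `K_H(x)` applied to a vector `a`. -/
def KHvec (k : ℝ) (x a : ℝ × ℝ) : ℝ × ℝ :=
  ((k ^ 2 + x.1 ^ 2 + x.2 ^ 2)⁻¹ * ((k ^ 2 + x.2 ^ 2) * a.1 - x.1 * x.2 * a.2),
   (k ^ 2 + x.1 ^ 2 + x.2 ^ 2)⁻¹ * (-(x.1 * x.2) * a.1 + (k ^ 2 + x.1 ^ 2) * a.2))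

/-- `det K_H(x) = k²/(k²+|x|²)`. -/
def detKH (k : ℝ) (x : ℝ × ℝ) : ℝ := k ^ 2 / (k ^ 2 + x.1 ^ 2 + x.2 ^ 2)

/-- Gradient of a scalar function on `ℝ²`. -/
def grad (u : ℝ × ℝ → ℝ) (x : ℝ × ℝ) : ℝ × ℝ :=
  (fderiv ℝ u x (1, 0), fderiv ℝ u x (0, 1))

/-- Divergence of a vector field on `ℝ²`. -/
def div2 (F : ℝ × ℝ → ℝ × ℝ) (x : ℝ × ℝ) : ℝ :=
  fderiv ℝ (fun y => (F y).1) x (1, 0) + fderiv ℝ (fun y => (F y).2) x (0, 1)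

/-- The operator `L_H u = -div (K_H(x) ∇u)`. -/
def LH (k : ℝ) (u : ℝ × ℝ → ℝ) (x : ℝ × ℝ) : ℝ :=
  - div2 (fun y => KHvec k y (grad u y)) x

/-- Positive part `t₊ = max (t, 0)`. -/
def pPart (t : ℝ) : ℝ := max t 0

/-- Clockwise rotation through `π/2`: `a^⊥`. -/
def perp2 (a : ℝ × ℝ) : ℝ × ℝ := (a.2, -a.1)

/-- Euclidean distance in the plane. -/
def dE (a b : ℝ × ℝ) : ℝ := Real.sqrt ((a.1 - b.1) ^ 2 + (a.2 - b.2) ^ 2)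

/-- Euclidean diameter of a planar set. -/
def diamE (S : Set (ℝ × ℝ)) : ℝ := sSup {d | ∃ a ∈ S, ∃ b ∈ S, d = dE a b}

/-- Euclidean distance between two planar sets. -/
def distE (A B : Set (ℝ × ℝ)) : ℝ := sInf {d | ∃ a ∈ A, ∃ b ∈ B, d = dE a b}

/-- The function `q² √(det K_H)`. -/
def Qfun (k : ℝ) (q : ℝ × ℝ → ℝ) (x : ℝ × ℝ) : ℝ := q x ^ 2 * Real.sqrt (detKH k x)

/-- Surrogate for membership in `H(Ω) = H¹₀(Ω)` (with equivalent norm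
`‖u‖² = ∫_Ω (K_H ∇u|∇u)`). -/
def MemH (k : ℝ) (Ω : Set (ℝ × ℝ)) (u : ℝ × ℝ → ℝ) : Prop :=
  ContinuousOn u (closure Ω) ∧ ContDiffOn ℝ 1 u Ω ∧ (∀ x ∈ frontier Ω, u x = 0) ∧
    IntegrableOn (fun x => KHform k x (grad u x) (grad u x)) Ω

/-- The energy functional `I_ε`. -/
def Ieps (k p ε : ℝ) (q : ℝ × ℝ → ℝ) (Ω : Set (ℝ × ℝ)) (u : ℝ × ℝ → ℝ) : ℝ :=
  (1 / 2) * (∫ x in Ω, KHform k x (grad u x) (grad u x))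
    - (1 / ((p + 1) * ε ^ 2)) * ∫ x in Ω, pPart (u x - q x * Real.log (1 / ε)) ^ (p + 1)

/-- The mountain pass value `c_ε = inf_{γ ∈ P_ε} max_{t ∈ [0,1]} I_ε(γ(t))`, where
`P_ε` is the collection of paths in `H(Ω)` (continuous for the `H`-norm) joining `0`
to a point with negative energy. -/
def ceps (k p : ℝ) (q : ℝ × ℝ → ℝ) (Ω : Set (ℝ × ℝ)) (ε : ℝ) : ℝ :=
  sInf {c | ∃ γ : ℝ → ℝ × ℝ → ℝ,
    (∀ t ∈ Icc (0:ℝ) 1, MemH k Ω (γ t)) ∧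
    (∀ t ∈ Icc (0:ℝ) 1, ∀ δ > 0, ∃ η > 0, ∀ s ∈ Icc (0:ℝ) 1, |s - t| < η →
      (∫ x in Ω, KHform k x (grad (fun y => γ s y - γ t y) x)
        (grad (fun y => γ s y - γ t y) x)) < δ) ∧
    γ 0 = (fun _ => 0) ∧ Ieps k p ε q Ω (γ 1) < 0 ∧
    c = sSup ((fun t => Ieps k p ε q Ω (γ t)) '' Icc (0:ℝ) 1)}

/-- The Nehari manifold `N_ε`. -/
def Nehari (k p ε : ℝ) (q : ℝ × ℝ → ℝ) (Ω : Set (ℝ × ℝ)) : Set (ℝ × ℝ → ℝ) :=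
  {u | MemH k Ω u ∧ ¬ Set.EqOn u 0 Ω ∧
    (∫ x in Ω, KHform k x (grad u x) (grad u x))
      = (1 / ε ^ 2) * ∫ x in Ω, pPart (u x - q x * Real.log (1 / ε)) ^ p * u x}

/-- `u` is a (classical) solution of `L_H u = ε⁻²(u - q ln(1/ε))₊ᵖ` in `Ω`, `u = 0` on `∂Ω`. -/
def IsSolution (k p ε : ℝ) (q : ℝ × ℝ → ℝ) (Ω : Set (ℝ × ℝ)) (u : ℝ × ℝ → ℝ) : Prop :=
  ContinuousOn u (closure Ω) ∧ ContDiffOn ℝ 2 u Ω ∧ (∀ x ∈ frontier Ω, u x = 0) ∧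
    ∀ x ∈ Ω, LH k u x = (1 / ε ^ 2) * pPart (u x - q x * Real.log (1 / ε)) ^ p

/-- `u` is a mountain pass solution: a solution at the mountain pass level `c_ε`. -/
def IsMPSolution (k p ε : ℝ) (q : ℝ × ℝ → ℝ) (Ω : Set (ℝ × ℝ)) (u : ℝ × ℝ → ℝ) : Prop :=
  IsSolution k p ε q Ω u ∧ MemH k Ω u ∧ Ieps k p ε q Ω u = ceps k p q Ω ε

/-- The vortex core `A_ε = {x ∈ Ω : u(x) > q(x) ln(1/ε)}`. -/
def vcore (q : ℝ × ℝ → ℝ) (Ω : Set (ℝ × ℝ)) (ε : ℝ) (u : ℝ × ℝ → ℝ) : Set (ℝ × ℝ) :=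
  {x ∈ Ω | q x * Real.log (1 / ε) < u x}

/-!
With `v = u / q`, expanding `∇u = q ∇v + v ∇q` gives the pointwise identity
`q² (K_H ∇v | ∇v) = (K_H ∇u | ∇u) - (K_H ∇q | ∇(u²/q))`, so it suffices that the last term
integrates to zero. Formally this is the weak form of `div (K_H ∇q) = 0` tested against `u²/q`,
which vanishes on `∂Ω` but need not be compactly supported in `Ω`. We therefore test against
`cutSq δ u / q` instead, whose support lies in the compact set `{|u| ≥ δ} ⊆ Ω`, and let `δ → 0`
by dominated convergence; the domination uses that `u` and `∇q` are bounded on `Ω`, that `q` is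
bounded below there, and that `(K_H ∇q | ∇u)` is integrable by Cauchy–Schwarz for `K_H`.
-/

section KHform

variable {k : ℝ}

lemma KHform_eq_KHvec_dot (x a b : ℝ × ℝ) :
    KHform k x a b = (KHvec k x a).1 * b.1 + (KHvec k x a).2 * b.2 := by
  simp only [KHform, KHvec]; ring

lemma KHform_add_add (x a b : ℝ × ℝ) :
    KHform k x (a + b) (a + b) = KHform k x a a + 2 * KHform k x a b + KHform k x b b := by
  simp only [KHform, Prod.fst_add, Prod.snd_add]; ring

lemma KHform_sub_sub (x a b : ℝ × ℝ) :
    KHform k x (a - b) (a - b) = KHform k x a a - 2 * KHform k x a b + KHform k x b b := by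
  simp only [KHform, Prod.fst_sub, Prod.snd_sub]; ring

lemma KHform_smul_sub_smul (x a b c : ℝ × ℝ) (s t : ℝ) :
    KHform k x c (s • a - t • b) = s * KHform k x c a - t * KHform k x c b := by
  simp only [KHform, Prod.fst_sub, Prod.snd_sub, Prod.smul_fst, Prod.smul_snd, smul_eq_mul]; ring

lemma KHform_self_nonneg (x a : ℝ × ℝ) : 0 ≤ KHform k x a a := by
  have h : (k ^ 2 + x.2 ^ 2) * a.1 * a.1 - x.1 * x.2 * a.1 * a.2 - x.1 * x.2 * a.2 * a.1
      + (k ^ 2 + x.1 ^ 2) * a.2 * a.2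
      = k ^ 2 * (a.1 ^ 2 + a.2 ^ 2) + (x.2 * a.1 - x.1 * a.2) ^ 2 := by
    ring
  rw [KHform, h]
  positivity

lemma KHform_self_le (x a : ℝ × ℝ) : KHform k x a a ≤ a.1 ^ 2 + a.2 ^ 2 := by
  set D := k ^ 2 + x.1 ^ 2 + x.2 ^ 2
  have h : (k ^ 2 + x.2 ^ 2) * a.1 * a.1 - x.1 * x.2 * a.1 * a.2 - x.1 * x.2 * a.2 * a.1
      + (k ^ 2 + x.1 ^ 2) * a.2 * a.2
      = D * (a.1 ^ 2 + a.2 ^ 2) - (x.1 * a.1 + x.2 * a.2) ^ 2 := by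
    ring
  rw [KHform, h, mul_sub, ← mul_assoc]
  have hD : D⁻¹ * D ≤ 1 := inv_mul_le_one (a := D)
  have hS : 0 ≤ D⁻¹ * (x.1 * a.1 + x.2 * a.2) ^ 2 := by positivity
  nlinarith [mul_le_mul_of_nonneg_right hD (by positivity : 0 ≤ a.1 ^ 2 + a.2 ^ 2)]

lemma abs_KHform_le (x a b : ℝ × ℝ) :
    |KHform k x a b| ≤ (KHform k x a a + KHform k x b b) / 2 := by
  have h₁ := KHform_self_nonneg (k := k) x (a + b)
  have h₂ := KHform_self_nonneg (k := k) x (a - b)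
  rw [KHform_add_add] at h₁
  rw [KHform_sub_sub] at h₂
  exact abs_le.2 ⟨by linarith, by linarith⟩

lemma sq_mul_KHform_sub_smul (x a b : ℝ × ℝ) {u q : ℝ} (hq : q ≠ 0) :
    q ^ 2 * KHform k x ((1 / q) • a - (u / q ^ 2) • b) ((1 / q) • a - (u / q ^ 2) • b)
      = KHform k x a a - KHform k x b ((2 * u / q) • a - (u ^ 2 / q ^ 2) • b) := by
  simp only [KHform, Prod.fst_sub, Prod.snd_sub, Prod.smul_fst, Prod.smul_snd, smul_eq_mul]
  field_simp
  ring

lemma ContinuousOn.KHform (hk : 0 < k) {s : Set (ℝ × ℝ)} {a b : ℝ × ℝ → ℝ × ℝ}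
    (ha : ContinuousOn a s) (hb : ContinuousOn b s) :
    ContinuousOn (fun x => KHform k x (a x) (b x)) s := by
  have hD : ContinuousOn (fun x : ℝ × ℝ => (k ^ 2 + x.1 ^ 2 + x.2 ^ 2)⁻¹) s :=
    (by fun_prop : Continuous fun x : ℝ × ℝ => k ^ 2 + x.1 ^ 2 + x.2 ^ 2).continuousOn.inv₀
      fun x _ => by positivity
  unfold _root_.KHform
  exact hD.mul (by fun_prop)

end KHform

lemma grad_eq_of_hasFDerivAt {f : ℝ × ℝ → ℝ} {f' : (ℝ × ℝ) →L[ℝ] ℝ} {x : ℝ × ℝ}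
    (hf : HasFDerivAt f f' x) : grad f x = (f' (1, 0), f' (0, 1)) := by
  rw [grad, hf.fderiv]

lemma grad_comp_div {c : ℝ → ℝ} {c' : ℝ} {u q : ℝ × ℝ → ℝ} {x : ℝ × ℝ}
    (hc : HasDerivAt c c' (u x)) (hu : DifferentiableAt ℝ u x) (hq : DifferentiableAt ℝ q x)
    (hqx : q x ≠ 0) :
    grad (fun y => c (u y) / q y) x = (c' / q x) • grad u x - (c (u x) / q x ^ 2) • grad q x := by
  have h := (hc.comp_hasFDerivAt x hu.hasFDerivAt).fun_mul
    ((hasDerivAt_inv hqx).comp_hasFDerivAt x hq.hasFDerivAt)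
  simp only [Function.comp_apply, ← div_eq_mul_inv] at h
  rw [grad_eq_of_hasFDerivAt h, grad, grad]
  ext <;> simp only [neg_smul, smul_neg, add_apply, neg_apply, smul_apply, smul_eq_mul,
    Prod.smul_mk, Prod.mk_sub_mk] <;> field_simp <;> ring

lemma norm_grad_le (f : ℝ × ℝ → ℝ) (x : ℝ × ℝ) : ‖grad f x‖ ≤ ‖fderiv ℝ f x‖ := by
  refine norm_prod_le_iff.2 ⟨?_, ?_⟩ <;>
  · refine (ContinuousLinearMap.le_opNorm _ _).trans_eq ?_
    simp

lemma continuousOn_grad {f : ℝ × ℝ → ℝ} {s : Set (ℝ × ℝ)} (hs : IsOpen s)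
    (hf : ContDiffOn ℝ 1 f s) : ContinuousOn (grad f) s := by
  have h := hf.continuousOn_fderiv_of_isOpen hs le_rfl
  exact (h.clm_apply continuousOn_const).prodMk (h.clm_apply continuousOn_const)

lemma grad_sq_div {u q : ℝ × ℝ → ℝ} {x : ℝ × ℝ} (hu : DifferentiableAt ℝ u x)
    (hq : DifferentiableAt ℝ q x) (hqx : q x ≠ 0) :
    grad (fun y => u y ^ 2 / q y) x
      = (2 * u x / q x) • grad u x - (u x ^ 2 / q x ^ 2) • grad q x :=
  grad_comp_div (c := fun t => t ^ 2) (by simpa using hasDerivAt_pow 2 (u x)) hu hq hqx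

lemma sq_mul_KHform_grad_div {k : ℝ} {u q : ℝ × ℝ → ℝ} {x : ℝ × ℝ}
    (hu : DifferentiableAt ℝ u x) (hq : DifferentiableAt ℝ q x) (hqx : q x ≠ 0) :
    q x ^ 2 * KHform k x (grad (fun y => u y / q y) x) (grad (fun y => u y / q y) x)
      = KHform k x (grad u x) (grad u x)
        - KHform k x (grad q x) (grad (fun y => u y ^ 2 / q y) x) := by
  rw [grad_comp_div (c := fun t => t) (hasDerivAt_id' _) hu hq hqx, grad_sq_div hu hq hqx]
  exact sq_mul_KHform_sub_smul x _ _ hqx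

theorem ContDiff.integrable_fderiv_apply {E : Type*} [NormedAddCommGroup E] [NormedSpace ℝ E]
    [MeasurableSpace E] [OpensMeasurableSpace E] {μ : Measure E} [IsFiniteMeasureOnCompacts μ]
    {f : E → ℝ} (hf : ContDiff ℝ 1 f) (hcs : HasCompactSupport f) (v : E) :
    Integrable (fun x => fderiv ℝ f x v) μ :=
  ((hf.continuous_fderiv_apply one_ne_zero).comp (continuous_id.prodMk continuous_const))
    |>.integrable_of_hasCompactSupport (hcs.fderiv_apply ℝ v)

theorem integral_fderiv_eq_zero_of_hasCompactSupport {E : Type*} [NormedAddCommGroup E]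
    [NormedSpace ℝ E] [FiniteDimensional ℝ E] [MeasurableSpace E] [BorelSpace E]
    {μ : Measure E} [μ.IsAddHaarMeasure] {f : E → ℝ} (hf : ContDiff ℝ 1 f)
    (hcs : HasCompactSupport f) (v : E) : ∫ x, fderiv ℝ f x v ∂μ = 0 := by
  have h := integral_mul_fderiv_eq_neg_fderiv_mul_of_integrable (μ := μ) (f := fun _ => (1 : ℝ))
    (g := f) (v := v) (by simp) (by simpa using hf.integrable_fderiv_apply hcs v)
    (by simpa using hf.continuous.integrable_of_hasCompactSupport hcs)
    (fun x _ => differentiableAt_const _) (fun x _ => hf.differentiable one_ne_zero x)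
  simpa using h

theorem ContDiffOn.contDiff_indicator {E F : Type*} [NormedAddCommGroup E] [NormedSpace ℝ E]
    [NormedAddCommGroup F] [NormedSpace ℝ F] {n : WithTop ℕ∞} {f : E → F} {s K : Set E}
    (hs : IsOpen s) (hK : IsClosed K) (hKs : K ⊆ s) (hf : ContDiffOn ℝ n f s)
    (hfK : ∀ x ∈ s \ K, f x = 0) : ContDiff ℝ n (s.indicator f) := by
  refine contDiff_iff_contDiffAt.2 fun x => ?_
  by_cases hx : x ∈ s
  · exact (hf.contDiffAt (hs.mem_nhds hx)).congr_of_eventuallyEq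
      (eventuallyEq_of_mem (hs.mem_nhds hx) fun y hy => indicator_of_mem hy f)
  · refine contDiffAt_const (c := (0 : F)).congr_of_eventuallyEq ?_
    filter_upwards [hK.isOpen_compl.mem_nhds fun hxK => hx (hKs hxK)] with y hy
    by_cases hys : y ∈ s
    · rw [indicator_of_mem hys, hfK y ⟨hys, hy⟩]
    · exact indicator_of_notMem hys f

theorem integral_dot_grad_eq_zero_of_div2_eq_zero {V : ℝ × ℝ → ℝ × ℝ} {φ : ℝ × ℝ → ℝ}
    {Ω K : Set (ℝ × ℝ)} (hΩ : IsOpen Ω) (hK : IsCompact K) (hKΩ : K ⊆ Ω)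
    (hV : ContDiffOn ℝ 1 V Ω) (hdiv : ∀ x ∈ Ω, div2 V x = 0)
    (hφ : ContDiffOn ℝ 1 φ Ω) (hφK : ∀ x ∈ Ω \ K, φ x = 0) :
    ∫ x in Ω, ((V x).1 * (grad φ x).1 + (V x).2 * (grad φ x).2) = 0 := by
  set f₁ := Ω.indicator fun x => (V x).1 * φ x
  set f₂ := Ω.indicator fun x => (V x).2 * φ x
  have hV₁ : ContDiffOn ℝ 1 (fun x => (V x).1) Ω := contDiff_fst.comp_contDiffOn hV
  have hV₂ : ContDiffOn ℝ 1 (fun x => (V x).2) Ω := contDiff_snd.comp_contDiffOn hV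
  have hf₁ : ContDiff ℝ 1 f₁ := (hV₁.mul hφ).contDiff_indicator hΩ hK.isClosed hKΩ
    fun x hx => by simp [hφK x hx]
  have hf₂ : ContDiff ℝ 1 f₂ := (hV₂.mul hφ).contDiff_indicator hΩ hK.isClosed hKΩ
    fun x hx => by simp [hφK x hx]
  have hvanish : ∀ g : ℝ × ℝ → ℝ, ∀ x ∉ K, Ω.indicator (fun y => g y * φ y) x = 0 := by
    intro g x hx
    by_cases hxΩ : x ∈ Ω
    · simp [indicator_of_mem hxΩ, hφK x ⟨hxΩ, hx⟩]
    · exact indicator_of_notMem hxΩ _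
  have hc₁ : HasCompactSupport f₁ := HasCompactSupport.intro hK (hvanish _)
  have hc₂ : HasCompactSupport f₂ := HasCompactSupport.intro hK (hvanish _)
  have hd : ∀ g : ℝ × ℝ → ℝ, ∀ x ∉ Ω, fderiv ℝ (Ω.indicator fun y => g y * φ y) x = 0 :=
    fun g x hx => fderiv_of_notMem_tsupport ℝ fun hxt => hx <| hKΩ <|
      closure_minimal (Function.support_subset_iff'.2 (hvanish g)) hK.isClosed hxt
  -- On `Ω`, `div (φ V) = V · ∇φ + φ div V = V · ∇φ`.
  have hdiv_eq : ∀ x ∈ Ω, fderiv ℝ f₁ x (1, 0) + fderiv ℝ f₂ x (0, 1)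
      = (V x).1 * (grad φ x).1 + (V x).2 * (grad φ x).2 := by
    intro x hx
    have hloc : ∀ g : ℝ × ℝ → ℝ, Ω.indicator g =ᶠ[𝓝 x] g :=
      fun g => eventuallyEq_of_mem (hΩ.mem_nhds hx) fun y hy => indicator_of_mem hy g
    have hdiff : ∀ g : ℝ × ℝ → ℝ, ContDiffOn ℝ 1 g Ω → DifferentiableAt ℝ g x :=
      fun g hg => (hg.contDiffAt (hΩ.mem_nhds hx)).differentiableAt one_ne_zero
    rw [(hloc _).fderiv_eq, (hloc _).fderiv_eq, fderiv_fun_mul (hdiff _ hV₁) (hdiff _ hφ),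
      fderiv_fun_mul (hdiff _ hV₂) (hdiff _ hφ)]
    have h0 := hdiv x hx
    simp only [div2] at h0
    simp only [grad, add_apply, smul_apply, smul_eq_mul]
    linear_combination φ x * h0
  rw [← setIntegral_congr_fun hΩ.measurableSet hdiv_eq,
    setIntegral_eq_integral_of_forall_compl_eq_zero fun x hx => by
      rw [hd _ x hx, hd _ x hx]; simp,
    integral_add (hf₁.integrable_fderiv_apply hc₁ _) (hf₂.integrable_fderiv_apply hc₂ _),
    integral_fderiv_eq_zero_of_hasCompactSupport hf₁ hc₁,
    integral_fderiv_eq_zero_of_hasCompactSupport hf₂ hc₂, add_zero]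

lemma contDiffOn_KHvec_grad {k : ℝ} (hk : 0 < k) {q : ℝ × ℝ → ℝ} {Ω : Set (ℝ × ℝ)}
    (hΩ : IsOpen Ω) (hq : ContDiffOn ℝ 2 q Ω) :
    ContDiffOn ℝ 1 (fun y => KHvec k y (grad q y)) Ω := by
  have hdq : ContDiffOn ℝ 1 (fderiv ℝ q) Ω := hq.fderiv_of_isOpen hΩ (by norm_num)
  have h₁ : ContDiffOn ℝ 1 (fun y => fderiv ℝ q y (1, 0)) Ω := hdq.clm_apply contDiffOn_const
  have h₂ : ContDiffOn ℝ 1 (fun y => fderiv ℝ q y (0, 1)) Ω := hdq.clm_apply contDiffOn_const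
  have hD : ContDiffOn ℝ 1 (fun y : ℝ × ℝ => (k ^ 2 + y.1 ^ 2 + y.2 ^ 2)⁻¹) Ω :=
    (by fun_prop : ContDiff ℝ 1 fun y : ℝ × ℝ => k ^ 2 + y.1 ^ 2 + y.2 ^ 2).contDiffOn.inv
      fun y _ => by positivity
  simp only [KHvec, grad]
  exact (hD.mul (by fun_prop)).prodMk (hD.mul (by fun_prop))

theorem integral_KHform_grad_eq_zero_of_LH_eq_zero {k : ℝ} (hk : 0 < k)
    {q φ : ℝ × ℝ → ℝ} {Ω K : Set (ℝ × ℝ)} (hΩ : IsOpen Ω) (hK : IsCompact K) (hKΩ : K ⊆ Ω)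
    (hq : ContDiffOn ℝ 2 q Ω) (hLq : ∀ x ∈ Ω, LH k q x = 0)
    (hφ : ContDiffOn ℝ 1 φ Ω) (hφK : ∀ x ∈ Ω \ K, φ x = 0) :
    ∫ x in Ω, KHform k x (grad q x) (grad φ x) = 0 := by
  simp only [KHform_eq_KHvec_dot]
  exact integral_dot_grad_eq_zero_of_div2_eq_zero hΩ hK hKΩ (contDiffOn_KHvec_grad hk hΩ hq)
    (fun x hx => neg_eq_zero.1 (hLq x hx)) hφ hφK

lemma hasDerivAt_max_zero_sq (t : ℝ) : HasDerivAt (fun s => max s 0 ^ 2) (2 * max t 0) t := by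
  refine hasDerivAt_of_hasDerivAt_of_ne' (f := fun s => max s 0 ^ 2) (g := fun s => 2 * max s 0)
    (x := 0) (fun s hs => ?_) (by fun_prop) (by fun_prop) t
  rcases hs.lt_or_gt with hs | hs
  · rw [max_eq_right hs.le, mul_zero]
    refine (hasDerivAt_const s (0 : ℝ)).congr_of_eventuallyEq ?_
    filter_upwards [Iio_mem_nhds hs] with r hr
    rw [max_eq_right (mem_Iio.1 hr).le, zero_pow two_ne_zero]
  · rw [max_eq_left hs.le]
    have h : HasDerivAt (fun r : ℝ => r ^ 2) (2 * s) s := by simpa using hasDerivAt_pow 2 s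
    refine h.congr_of_eventuallyEq ?_
    filter_upwards [Ioi_mem_nhds hs] with r hr
    rw [max_eq_left (mem_Ioi.1 hr).le]

/-- A `C¹` approximation of `t ↦ t²` that vanishes on `[-δ, δ]`. -/
def cutSq (δ t : ℝ) : ℝ := max (t - δ) 0 ^ 2 + max (-t - δ) 0 ^ 2

def cutSqDeriv (δ t : ℝ) : ℝ := 2 * max (t - δ) 0 - 2 * max (-t - δ) 0

lemma hasDerivAt_cutSq (δ t : ℝ) : HasDerivAt (cutSq δ) (cutSqDeriv δ t) t := by
  have h₁ := (hasDerivAt_max_zero_sq (t - δ)).comp t ((hasDerivAt_id t).sub_const δ)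
  have h₂ := (hasDerivAt_max_zero_sq (-t - δ)).comp t ((hasDerivAt_id t).neg.sub_const δ)
  have h := h₁.add h₂
  rwa [show 2 * max (t - δ) 0 * 1 + 2 * max (-t - δ) 0 * -1 = cutSqDeriv δ t by
    rw [cutSqDeriv]; ring] at h

lemma contDiff_cutSq (δ : ℝ) : ContDiff ℝ 1 (cutSq δ) := by
  rw [contDiff_one_iff_deriv]
  refine ⟨fun t => (hasDerivAt_cutSq δ t).differentiableAt, ?_⟩
  rw [funext fun t => (hasDerivAt_cutSq δ t).deriv]
  unfold cutSqDeriv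
  fun_prop

lemma cutSq_eq_zero {δ t : ℝ} (h : |t| < δ) : cutSq δ t = 0 := by
  rw [abs_lt] at h
  simp [cutSq, max_eq_right (by linarith : t - δ ≤ 0), max_eq_right (by linarith : -t - δ ≤ 0)]

lemma cutSq_zero (t : ℝ) : cutSq 0 t = t ^ 2 := by
  rcases le_total t 0 with h | h <;> simp [cutSq, h]

lemma cutSqDeriv_zero (t : ℝ) : cutSqDeriv 0 t = 2 * t := by
  rcases le_total t 0 with h | h <;> simp [cutSqDeriv, h]

lemma abs_cutSq_le {δ : ℝ} (hδ : 0 ≤ δ) (t : ℝ) : |cutSq δ t| ≤ t ^ 2 := by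
  rw [abs_of_nonneg (by unfold cutSq; positivity), cutSq]
  rcases le_total t 0 with h | h
  · rw [max_eq_right (by linarith : t - δ ≤ 0)]
    nlinarith [le_max_right (-t - δ) 0, max_le (by linarith : -t - δ ≤ -t) (by linarith : 0 ≤ -t)]
  · rw [max_eq_right (by linarith : -t - δ ≤ 0)]
    nlinarith [le_max_right (t - δ) 0, max_le (by linarith : t - δ ≤ t) h]

lemma abs_cutSqDeriv_le {δ : ℝ} (hδ : 0 ≤ δ) (t : ℝ) : |cutSqDeriv δ t| ≤ 2 * |t| := by
  rw [cutSqDeriv, abs_le]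
  rcases le_total t 0 with h | h
  · rw [max_eq_right (by linarith : t - δ ≤ 0), abs_of_nonpos h]
    constructor <;> linarith [le_max_right (-t - δ) 0, max_le (by linarith : -t - δ ≤ -t)
      (by linarith : 0 ≤ -t)]
  · rw [max_eq_right (by linarith : -t - δ ≤ 0), abs_of_nonneg h]
    constructor <;> linarith [le_max_right (t - δ) 0, max_le (by linarith : t - δ ≤ t) h]

theorem exists_norm_fderiv_le_of_contDiffOn_closure {E F : Type*} [NormedAddCommGroup E]
    [NormedSpace ℝ E] [NormedAddCommGroup F] [NormedSpace ℝ F] {f : E → F} {s : Set E}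
    (hs : IsOpen s) (hsc : IsCompact (closure s)) (hf : ContDiffOn ℝ 1 f (closure s)) :
    ∃ C, ∀ x ∈ s, ‖fderiv ℝ f x‖ ≤ C := by
  -- Near each point of `closure s` the derivative within `closure s` is continuous, hence
  -- locally bounded; compactness of `closure s` turns the local bounds into a global one.
  suffices h : ∃ C, ∀ x ∈ closure s ∩ s, ‖fderiv ℝ f x‖ ≤ C by
    simpa [inter_eq_right.2 subset_closure] using h
  refine hsc.induction_on (p := fun t => ∃ C, ∀ x ∈ t ∩ s, ‖fderiv ℝ f x‖ ≤ C)
    ⟨0, by simp⟩ (fun t t' htt' ⟨C, hC⟩ => ⟨C, fun x hx => hC x ⟨htt' hx.1, hx.2⟩⟩)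
    (fun t t' ⟨C, hC⟩ ⟨C', hC'⟩ => ⟨max C C', fun x ⟨hx, hxs⟩ => hx.elim
      (fun hx => (hC x ⟨hx, hxs⟩).trans (le_max_left _ _))
      (fun hx => (hC' x ⟨hx, hxs⟩).trans (le_max_right _ _))⟩) fun x hx => ?_
  obtain ⟨u, hu, -, -, f', hf', hf'c⟩ :=
    (contDiffWithinAt_succ_iff_hasFDerivWithinAt' (n := 0) (by simp)).1 (hf x hx)
  rw [insert_eq_of_mem hx] at hu
  refine ⟨u ∩ {y | ‖f' y‖ ≤ ‖f' x‖ + 1}, inter_mem hu ?_, ‖f' x‖ + 1, fun y ⟨⟨hyu, hyb⟩, hys⟩ => ?_⟩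
  · exact (hf'c.continuousWithinAt.norm.eventually (ge_mem_nhds (lt_add_one _)))
  · rw [((hf' y hyu).hasFDerivAt (mem_of_superset (hs.mem_nhds hys) subset_closure)).fderiv]
    exact hyb

theorem tendsto_setIntegral_mul_of_tendsto {α : Type*} [MeasurableSpace α] {μ : Measure α}
    {s : Set α} (hs : MeasurableSet s) {P a : α → ℝ} {aₙ : ℕ → α → ℝ} {A : ℝ}
    (hP : IntegrableOn P s μ) (haₙ : ∀ n, AEStronglyMeasurable (aₙ n) (μ.restrict s))
    (hA : ∀ n, ∀ x ∈ s, |aₙ n x| ≤ A) (hlim : ∀ x ∈ s, Tendsto (fun n => aₙ n x) atTop (𝓝 (a x))) :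
    Tendsto (fun n => ∫ x in s, aₙ n x * P x ∂μ) atTop (𝓝 (∫ x in s, a x * P x ∂μ)) := by
  refine tendsto_integral_of_dominated_convergence (fun x => A * |P x|)
    (fun n => (haₙ n).mul hP.1) (hP.abs.const_mul A) (fun n => ?_) ?_
  · filter_upwards [self_mem_ae_restrict hs] with x hx
    rw [norm_mul, Real.norm_eq_abs, Real.norm_eq_abs]
    exact mul_le_mul_of_nonneg_right (hA n x hx) (abs_nonneg _)
  · filter_upwards [self_mem_ae_restrict hs] with x hx
    exact (hlim x hx).mul_const _

theorem MeasureTheory.IntegrableOn.mul_of_continuousOn_of_abs_le {α : Type*}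
    [TopologicalSpace α] [MeasurableSpace α] [OpensMeasurableSpace α] {μ : Measure α}
    {s : Set α} (hs : MeasurableSet s) {c P : α → ℝ} {A : ℝ} (hP : IntegrableOn P s μ)
    (hc : ContinuousOn c s) (hA : ∀ x ∈ s, |c x| ≤ A) : IntegrableOn (fun x => c x * P x) s μ :=
  hP.bdd_mul (hc.aestronglyMeasurable hs) ((ae_restrict_iff' hs).2 (ae_of_all _ hA))

lemma abs_div_le_div_of_le {a b A c : ℝ} (ha : |a| ≤ A) (hc : 0 < c) (hb : c ≤ b) :
    |a / b| ≤ A / c := by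
  rw [abs_div, abs_of_pos (hc.trans_le hb)]
  exact div_le_div₀ ((abs_nonneg a).trans ha) ha hc hb

theorem integral_mul_sub_mul_eq_zero_of_tendsto {α : Type*} [TopologicalSpace α]
    [MeasurableSpace α] [OpensMeasurableSpace α] {μ : Measure α} {s : Set α}
    (hs : MeasurableSet s) {P Q : α → ℝ} (hP : IntegrableOn P s μ) (hQ : IntegrableOn Q s μ)
    {a b : ℝ → α → ℝ} {A B : ℝ} (ha : ∀ δ, 0 ≤ δ → ContinuousOn (a δ) s)
    (hb : ∀ δ, 0 ≤ δ → ContinuousOn (b δ) s) (haA : ∀ δ, 0 ≤ δ → ∀ x ∈ s, |a δ x| ≤ A)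
    (hbB : ∀ δ, 0 ≤ δ → ∀ x ∈ s, |b δ x| ≤ B) (ha0 : ∀ x ∈ s, ContinuousAt (fun δ => a δ x) 0)
    (hb0 : ∀ x ∈ s, ContinuousAt (fun δ => b δ x) 0)
    (hzero : ∀ δ, 0 < δ → ∫ x in s, (a δ x * P x - b δ x * Q x) ∂μ = 0) :
    IntegrableOn (fun x => a 0 x * P x - b 0 x * Q x) s μ ∧
      ∫ x in s, (a 0 x * P x - b 0 x * Q x) ∂μ = 0 := by
  have haP : ∀ δ, 0 ≤ δ → IntegrableOn (fun x => a δ x * P x) s μ :=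
    fun δ hδ => hP.mul_of_continuousOn_of_abs_le hs (ha δ hδ) (haA δ hδ)
  have hbQ : ∀ δ, 0 ≤ δ → IntegrableOn (fun x => b δ x * Q x) s μ :=
    fun δ hδ => hQ.mul_of_continuousOn_of_abs_le hs (hb δ hδ) (hbB δ hδ)
  refine ⟨(haP 0 le_rfl).sub (hbQ 0 le_rfl), ?_⟩
  set δ : ℕ → ℝ := fun n => 1 / (n + 1)
  have hδ : Tendsto δ atTop (𝓝 0) := tendsto_one_div_add_atTop_nhds_zero_nat
  have hA := tendsto_setIntegral_mul_of_tendsto hs hP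
    (fun n => (ha (δ n) (by positivity)).aestronglyMeasurable hs)
    (fun n => haA (δ n) (by positivity)) fun x hx => (ha0 x hx).tendsto.comp hδ
  have hB := tendsto_setIntegral_mul_of_tendsto hs hQ
    (fun n => (hb (δ n) (by positivity)).aestronglyMeasurable hs)
    (fun n => hbB (δ n) (by positivity)) fun x hx => (hb0 x hx).tendsto.comp hδ
  rw [integral_sub (haP 0 le_rfl) (hbQ 0 le_rfl)]
  refine tendsto_nhds_unique (hA.sub hB) (tendsto_const_nhds.congr fun n => ?_)
  rw [← integral_sub (haP _ (by positivity)) (hbQ _ (by positivity)), hzero _ (by positivity)]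

theorem integrableOn_KHform_grad_self {k : ℝ} (hk : 0 < k) {Ω : Set (ℝ × ℝ)} (hΩ : IsOpen Ω)
    (hΩb : Bornology.IsBounded Ω) {q : ℝ × ℝ → ℝ} (hq : ContDiffOn ℝ 1 q (closure Ω)) :
    IntegrableOn (fun x => KHform k x (grad q x) (grad q x)) Ω := by
  obtain ⟨C, hC⟩ := exists_norm_fderiv_le_of_contDiffOn_closure hΩ hΩb.isCompact_closure hq
  have hg := continuousOn_grad hΩ (hq.mono subset_closure)
  refine (integrableOn_const (C := 2 * C ^ 2) hΩb.measure_lt_top.ne).mono'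
    ((hg.KHform hk hg).aestronglyMeasurable hΩ.measurableSet) ?_
  filter_upwards [self_mem_ae_restrict hΩ.measurableSet] with x hx
  have hgx : ‖grad q x‖ ≤ C := (norm_grad_le q x).trans (hC x hx)
  have h₁ := abs_le.1 ((norm_fst_le (grad q x)).trans hgx)
  have h₂ := abs_le.1 ((norm_snd_le (grad q x)).trans hgx)
  rw [Real.norm_eq_abs, abs_of_nonneg (KHform_self_nonneg _ _)]
  calc KHform k x (grad q x) (grad q x) ≤ (grad q x).1 ^ 2 + (grad q x).2 ^ 2 := KHform_self_le _ _
    _ ≤ 2 * C ^ 2 := by nlinarith [sq_le_sq' h₁.1 h₁.2, sq_le_sq' h₂.1 h₂.2]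

theorem MeasureTheory.IntegrableOn.KHform_of_self {k : ℝ} (hk : 0 < k) {s : Set (ℝ × ℝ)}
    (hs : MeasurableSet s) {a b : ℝ × ℝ → ℝ × ℝ} (ha : ContinuousOn a s) (hb : ContinuousOn b s)
    (haa : IntegrableOn (fun x => KHform k x (a x) (a x)) s)
    (hbb : IntegrableOn (fun x => KHform k x (b x) (b x)) s) :
    IntegrableOn (fun x => KHform k x (a x) (b x)) s :=
  ((haa.add hbb).div_const 2).mono' ((ha.KHform hk hb).aestronglyMeasurable hs)
    (ae_restrict_of_forall_mem hs fun x _ => abs_KHform_le x (a x) (b x))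

section Harmonic

variable {k : ℝ} {Ω : Set (ℝ × ℝ)} {q u : ℝ × ℝ → ℝ}

lemma closure_inter_abs_ge_subset (hΩ : IsOpen Ω) (hu0 : ∀ x ∈ frontier Ω, u x = 0) {δ : ℝ}
    (hδ : 0 < δ) : closure Ω ∩ {x | δ ≤ |u x|} ⊆ Ω := fun x ⟨hxc, hxu⟩ => by
  by_contra hxΩ
  have hux : δ ≤ |u x| := hxu
  rw [hu0 x ⟨hxc, by rwa [hΩ.interior_eq]⟩, abs_zero] at hux
  linarith

theorem integral_cutSq_mul_KHform_eq_zero (hk : 0 < k) (hΩ : IsOpen Ω)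
    (hΩb : Bornology.IsBounded Ω) (hq : ContDiffOn ℝ 2 q Ω) (hLq : ∀ x ∈ Ω, LH k q x = 0)
    (hq0 : ∀ x ∈ Ω, 0 < q x) (hu_cont : ContinuousOn u (closure Ω)) (hu : ContDiffOn ℝ 1 u Ω)
    (hu0 : ∀ x ∈ frontier Ω, u x = 0) {δ : ℝ} (hδ : 0 < δ) :
    ∫ x in Ω, (cutSqDeriv δ (u x) / q x * KHform k x (grad q x) (grad u x)
      - cutSq δ (u x) / q x ^ 2 * KHform k x (grad q x) (grad q x)) = 0 := by
  set K := closure Ω ∩ {x | δ ≤ |u x|}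
  have hK : IsCompact K := hΩb.isCompact_closure.of_isClosed_subset
    ((continuous_abs.comp_continuousOn hu_cont).preimage_isClosed_of_isClosed isClosed_closure
      isClosed_Ici) inter_subset_left
  have hφ : ContDiffOn ℝ 1 (fun y => cutSq δ (u y) / q y) Ω :=
    ((contDiff_cutSq δ).comp_contDiffOn hu).div (hq.of_le (by norm_num)) fun x hx => (hq0 x hx).ne'
  have hφK : ∀ x ∈ Ω \ K, cutSq δ (u x) / q x = 0 := fun x ⟨hx, hxK⟩ => by
    rw [cutSq_eq_zero (not_le.1 fun h => hxK ⟨subset_closure hx, h⟩), zero_div]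
  rw [← integral_KHform_grad_eq_zero_of_LH_eq_zero hk hΩ hK
    (closure_inter_abs_ge_subset hΩ hu0 hδ) hq hLq hφ hφK]
  refine setIntegral_congr_fun hΩ.measurableSet fun x hx => ?_
  rw [grad_comp_div (hasDerivAt_cutSq δ (u x))
    ((hu.contDiffAt (hΩ.mem_nhds hx)).differentiableAt one_ne_zero)
    ((hq.contDiffAt (hΩ.mem_nhds hx)).differentiableAt two_ne_zero) (hq0 x hx).ne',
    KHform_smul_sub_smul]

theorem integral_KHform_grad_sq_div_eq_zero (hk : 0 < k) (hΩ : IsOpen Ω)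
    (hΩb : Bornology.IsBounded Ω) (hq : ContDiffOn ℝ 2 q Ω) (hLq : ∀ x ∈ Ω, LH k q x = 0)
    {c₀ : ℝ} (hc₀ : 0 < c₀) (hqc₀ : ∀ x ∈ Ω, c₀ ≤ q x)
    (hu_cont : ContinuousOn u (closure Ω)) (hu : ContDiffOn ℝ 1 u Ω)
    (hu0 : ∀ x ∈ frontier Ω, u x = 0) {C : ℝ} (huC : ∀ x ∈ Ω, |u x| ≤ C)
    (hP : IntegrableOn (fun x => KHform k x (grad q x) (grad u x)) Ω)
    (hQ : IntegrableOn (fun x => KHform k x (grad q x) (grad q x)) Ω) :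
    IntegrableOn (fun x => KHform k x (grad q x) (grad (fun y => u y ^ 2 / q y) x)) Ω ∧
      ∫ x in Ω, KHform k x (grad q x) (grad (fun y => u y ^ 2 / q y) x) = 0 := by
  have hΩm := hΩ.measurableSet
  have hq0 : ∀ x ∈ Ω, 0 < q x := fun x hx => hc₀.trans_le (hqc₀ x hx)
  have hqc : ContinuousOn q Ω := hq.continuousOn
  have huc : ContinuousOn u Ω := hu_cont.mono subset_closure
  have hG : ∀ x ∈ Ω, KHform k x (grad q x) (grad (fun y => u y ^ 2 / q y) x)
      = cutSqDeriv 0 (u x) / q x * KHform k x (grad q x) (grad u x)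
        - cutSq 0 (u x) / q x ^ 2 * KHform k x (grad q x) (grad q x) := fun x hx => by
    rw [grad_sq_div ((hu.contDiffAt (hΩ.mem_nhds hx)).differentiableAt one_ne_zero)
      ((hq.contDiffAt (hΩ.mem_nhds hx)).differentiableAt two_ne_zero) (hq0 x hx).ne',
      KHform_smul_sub_smul, cutSqDeriv_zero, cutSq_zero]
  rw [integrableOn_congr_fun hG hΩm, setIntegral_congr_fun hΩm hG]
  refine integral_mul_sub_mul_eq_zero_of_tendsto hΩm hP hQ (A := 2 * C / c₀) (B := C ^ 2 / c₀ ^ 2)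
    (fun δ _ => ((by unfold cutSqDeriv; fun_prop : Continuous (cutSqDeriv δ)).comp_continuousOn
      huc).div hqc fun x hx => (hq0 x hx).ne')
    (fun δ _ => ((contDiff_cutSq δ).continuous.comp_continuousOn huc).div (hqc.pow 2)
      fun x hx => pow_ne_zero 2 (hq0 x hx).ne')
    (fun δ hδ x hx => abs_div_le_div_of_le
      ((abs_cutSqDeriv_le hδ _).trans (by linarith [huC x hx])) hc₀ (hqc₀ x hx))
    (fun δ hδ x hx => abs_div_le_div_of_le ((abs_cutSq_le hδ _).trans
      (sq_le_sq' (abs_le.1 (huC x hx)).1 (abs_le.1 (huC x hx)).2))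
      (by positivity) (pow_le_pow_left₀ hc₀.le (hqc₀ x hx) 2))
    (fun x _ => ((by unfold cutSqDeriv; fun_prop : Continuous fun δ => cutSqDeriv δ (u x))
      |>.continuousAt).div_const _)
    (fun x _ => ((by unfold cutSq; fun_prop : Continuous fun δ => cutSq δ (u x))
      |>.continuousAt).div_const _)
    fun δ hδ => integral_cutSq_mul_KHform_eq_zero hk hΩ hΩb hq hLq hq0 hu_cont hu hu0 hδ

end Harmonic

theorem statement4_general (k : ℝ) (hk : 0 < k)
    (Ω : Set (ℝ × ℝ)) (hΩo : IsOpen Ω)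
    (hΩb : Bornology.IsBounded Ω)
    (q : ℝ × ℝ → ℝ) (hq1 : ContDiffOn ℝ 2 q Ω) (hq2 : ContDiffOn ℝ 1 q (closure Ω))
    (hq3 : ∀ x ∈ closure Ω, 0 < q x) (hq4 : ∀ x ∈ Ω, LH k q x = 0)
    (u : ℝ × ℝ → ℝ) (hu : MemH k Ω u) :
    (∫ x in Ω, KHform k x (grad u x) (grad u x))
      = ∫ x in Ω, q x ^ 2 *
          KHform k x (grad (fun y => u y / q y) x) (grad (fun y => u y / q y) x) := by
  obtain ⟨hu_cont, hu_diff, hu0, huu⟩ := hu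
  have hΩm := hΩo.measurableSet
  obtain ⟨c₀, hc₀, hqc₀⟩ := hΩb.isCompact_closure.exists_forall_le' hq2.continuousOn hq3
  obtain ⟨C, hC⟩ := hΩb.isCompact_closure.exists_bound_of_continuousOn hu_cont
  have hgq := continuousOn_grad hΩo (hq1.of_le one_le_two)
  have hgu := continuousOn_grad hΩo hu_diff
  have hQ := integrableOn_KHform_grad_self hk hΩo hΩb hq2
  obtain ⟨hG, hG0⟩ := integral_KHform_grad_sq_div_eq_zero hk hΩo hΩb hq1 hq4 hc₀
    (fun x hx => hqc₀ x (subset_closure hx)) hu_cont hu_diff hu0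
    (fun x hx => hC x (subset_closure hx)) (hQ.KHform_of_self hk hΩm hgq hgu huu) hQ
  have hpt : ∀ x ∈ Ω, q x ^ 2 *
      KHform k x (grad (fun y => u y / q y) x) (grad (fun y => u y / q y) x)
      = KHform k x (grad u x) (grad u x)
        - KHform k x (grad q x) (grad (fun y => u y ^ 2 / q y) x) := fun x hx =>
    sq_mul_KHform_grad_div ((hu_diff.contDiffAt (hΩo.mem_nhds hx)).differentiableAt one_ne_zero)
      ((hq1.contDiffAt (hΩo.mem_nhds hx)).differentiableAt two_ne_zero)
      (hc₀.trans_le (hqc₀ x (subset_closure hx))).ne'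
  rw [setIntegral_congr_fun hΩm hpt, integral_sub huu hG, hG0, sub_zero]

/-- Lemma 2.5: for every `u ∈ H(Ω)`,
`∫_Ω (K_H ∇u|∇u) = ∫_Ω q² (K_H ∇(u/q)|∇(u/q))`, where `q > 0` is `L_H`-harmonic. -/
theorem statement4 (k : ℝ) (hk : 0 < k)
    (Ω : Set (ℝ × ℝ)) (hΩo : IsOpen Ω) (hΩc : IsConnected Ω)
    (hΩb : Bornology.IsBounded Ω) (hΩsc : SimplyConnectedSpace ↥Ω)
    (q : ℝ × ℝ → ℝ) (hq1 : ContDiffOn ℝ 2 q Ω) (hq2 : ContDiffOn ℝ 1 q (closure Ω))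
    (hq3 : ∀ x ∈ closure Ω, 0 < q x) (hq4 : ∀ x ∈ Ω, LH k q x = 0)
    (u : ℝ × ℝ → ℝ) (hu : MemH k Ω u) :
    (∫ x in Ω, KHform k x (grad u x) (grad u x))
      = ∫ x in Ω, q x ^ 2 *
          KHform k x (grad (fun y => u y / q y) x) (grad (fun y => u y / q y) x) :=
  statement4_general k hk Ω hΩo hΩb q hq1 hq2 hq3 hq4 u hu
end
end

section
/- For every x̄ ∈ ℝ² and every y ∈ ℝ², K_H(R̄_{x̄} y) = R̄_{x̄} K_H(y) R̄_{x̄}ᵗ, where for x̄ = (|x̄|cos θ_{x̄}, |x̄|sin θ_{x̄}) the matrix R̄_{x̄} = [[cos θ_{x̄}, sin θ_{x̄}],[−sin θ_{x̄}, cos θ_{x̄}]] is the clockwise rotation through θ_{x̄}. -/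
open MeasureTheory Real Filter Topology Set Matrix

noncomputable section

/-- The matrix `K_H(x) = (k²+|x|²)⁻¹ [[k²+x₂², -x₁x₂],[-x₁x₂, k²+x₁²]]`. -/
def KHmat (k : ℝ) (x : ℝ × ℝ) : Matrix (Fin 2) (Fin 2) ℝ :=
  (k ^ 2 + x.1 ^ 2 + x.2 ^ 2)⁻¹ •
    !![k ^ 2 + x.2 ^ 2, -(x.1 * x.2); -(x.1 * x.2), k ^ 2 + x.1 ^ 2]

/-- The clockwise rotation matrix `R̄_θ`. -/
def Rmat (θ : ℝ) : Matrix (Fin 2) (Fin 2) ℝ :=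
  !![Real.cos θ, Real.sin θ; -Real.sin θ, Real.cos θ]

/-- The clockwise rotation through `θ` acting on `ℝ²`. -/
def rot2 (θ : ℝ) (x : ℝ × ℝ) : ℝ × ℝ :=
  (x.1 * Real.cos θ + x.2 * Real.sin θ, -x.1 * Real.sin θ + x.2 * Real.cos θ)

/-! The numerator of `K_H(y)` is `(k² + |y|²) I - y yᵀ`. A rotation `R` preserves `|y|²` and
turns `y yᵀ` into `R (y yᵀ) Rᵀ`, while `R Rᵀ = I`; so conjugating by `R` commutes with forming
`K_H`. -/

theorem vecMulVec_mulVec_self {α m n : Type*} [CommSemiring α] [Fintype m] (A : Matrix n m α)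
    (v : m → α) :
    vecMulVec (A *ᵥ v) (A *ᵥ v) = A * vecMulVec v v * Aᵀ := by
  rw [mul_vecMulVec, vecMulVec_mul, vecMul_transpose]

section

variable {n : Type*} [Fintype n] [DecidableEq n]

def KHmatVec (k : ℝ) (v : n → ℝ) : Matrix n n ℝ :=
  (k ^ 2 + v ⬝ᵥ v)⁻¹ • ((k ^ 2 + v ⬝ᵥ v) • 1 - vecMulVec v v)

theorem dotProduct_mulVec_self_of_mem_orthogonalGroup {R : Type*} [CommRing R]
    {A : Matrix n n R} (hA : A ∈ orthogonalGroup n R) (v : n → R) :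
    (A *ᵥ v) ⬝ᵥ (A *ᵥ v) = v ⬝ᵥ v := by
  rw [dotProduct_mulVec, ← vecMul_transpose, vecMul_vecMul, (mem_orthogonalGroup_iff' n R).mp hA,
    vecMul_one]

theorem KHmatVec_mulVec_of_mem_orthogonalGroup (k : ℝ) {A : Matrix n n ℝ}
    (hA : A ∈ orthogonalGroup n ℝ) (v : n → ℝ) :
    KHmatVec k (A *ᵥ v) = A * KHmatVec k v * Aᵀ := by
  rw [KHmatVec, KHmatVec, dotProduct_mulVec_self_of_mem_orthogonalGroup hA,
    vecMulVec_mulVec_self, Matrix.mul_smul, Matrix.smul_mul, Matrix.mul_sub, Matrix.sub_mul,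
    Matrix.mul_smul, Matrix.smul_mul, Matrix.mul_one, (mem_orthogonalGroup_iff n ℝ).mp hA]

end

theorem KHmat_eq_KHmatVec (k : ℝ) (x : ℝ × ℝ) : KHmat k x = KHmatVec k ![x.1, x.2] := by
  have hdot : ![x.1, x.2] ⬝ᵥ ![x.1, x.2] = x.1 ^ 2 + x.2 ^ 2 := by
    simp [dotProduct, Fin.sum_univ_two, sq]
  rw [KHmat, KHmatVec, hdot, add_assoc]
  congr 1
  ext i j
  fin_cases i <;> fin_cases j <;> simp <;> ring

theorem rot2_eq_Rmat_mulVec (θ : ℝ) (x : ℝ × ℝ) :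
    ![(rot2 θ x).1, (rot2 θ x).2] = Rmat θ *ᵥ ![x.1, x.2] := by
  ext i
  fin_cases i <;> simp [rot2, Rmat]

theorem Rmat_mem_orthogonalGroup (θ : ℝ) : Rmat θ ∈ orthogonalGroup (Fin 2) ℝ := by
  rw [mem_orthogonalGroup_iff]
  ext i j
  fin_cases i <;> fin_cases j <;> simp [Rmat, mul_apply, Fin.sum_univ_two, ← sq, mul_comm]

theorem statement6_general (k : ℝ) (θ : ℝ) :
    ∀ y : ℝ × ℝ, KHmat k (rot2 θ y) = Rmat θ * KHmat k y * (Rmat θ)ᵀ := by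
  intro y
  rw [KHmat_eq_KHmatVec, rot2_eq_Rmat_mulVec,
    KHmatVec_mulVec_of_mem_orthogonalGroup k (Rmat_mem_orthogonalGroup θ), KHmat_eq_KHmatVec]

/-- Lemma 2.6: for every `x̄ ∈ ℝ²` with angle `θ` (i.e.
`x̄ = (|x̄| cos θ, |x̄| sin θ)`), one has `K_H(R̄_{x̄} y) = R̄_{x̄} K_H(y) R̄_{x̄}ᵀ`
for all `y ∈ ℝ²`. -/
theorem statement6 (k : ℝ) (hk : 0 < k) (xbar : ℝ × ℝ) (θ : ℝ)
    (hθ : xbar = (Real.sqrt (xbar.1 ^ 2 + xbar.2 ^ 2) * Real.cos θ,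
                  Real.sqrt (xbar.1 ^ 2 + xbar.2 ^ 2) * Real.sin θ)) :
    ∀ y : ℝ × ℝ, KHmat k (rot2 θ y) = Rmat θ * KHmat k y * (Rmat θ)ᵀ :=
  statement6_general k θ
end
end

section
/- For every x ∈ ℝ², the matrix K_H(x) is symmetric positive definite with eigenvalues λ₁ = 1 and λ₂ = k²/(k² + |x|²); consequently det K_H(x) = k²/(k² + |x|²) and for all ζ ∈ ℝ², (k²/(k²+|x|²))·|ζ|² ≤ (K_H(x)ζ|ζ) ≤ |ζ|². -/
/-! `K_H(x) = I - d⁻¹ x xᵀ` with `d = k² + |x|²`. A rank-one perturbation `I - c u uᵀ` of the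
identity fixes `u^⊥` and scales `u` by `1 - c |u|²`, here `1 - |x|²/d = k²/d`; this gives both
eigenvalues and, by the matrix determinant lemma, the determinant. Its quadratic form is
`|ζ|² - c (u·ζ)²`, which Cauchy–Schwarz squeezes between `(1 - c |u|²) |ζ|²` and `|ζ|²`. -/

open Matrix

noncomputable section

namespace Matrix

theorem transpose_one_sub_smul_vecMulVec {n : Type*} [DecidableEq n] (c : ℝ) (u : n → ℝ) :
    (1 - c • vecMulVec u u)ᵀ = 1 - c • vecMulVec u u := by
  rw [transpose_sub, transpose_one, transpose_smul, transpose_vecMulVec]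

variable {n : Type*} [Fintype n]

theorem sq_dotProduct_le (u v : n → ℝ) : (u ⬝ᵥ v) ^ 2 ≤ (u ⬝ᵥ u) * (v ⬝ᵥ v) := by
  simpa only [dotProduct, sq] using Finset.sum_mul_sq_le_sq_mul_sq Finset.univ u v

variable [DecidableEq n] (c : ℝ) (u : n → ℝ)

theorem one_sub_smul_vecMulVec_mulVec (v : n → ℝ) :
    (1 - c • vecMulVec u u) *ᵥ v = v - (c * (u ⬝ᵥ v)) • u := by
  rw [sub_mulVec, one_mulVec, smul_mulVec, vecMulVec_mulVec, op_smul_eq_smul, smul_smul]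

theorem dotProduct_one_sub_smul_vecMulVec_mulVec (v : n → ℝ) :
    v ⬝ᵥ (1 - c • vecMulVec u u) *ᵥ v = v ⬝ᵥ v - c * (u ⬝ᵥ v) ^ 2 := by
  rw [one_sub_smul_vecMulVec_mulVec, dotProduct_sub, dotProduct_smul, dotProduct_comm v u,
    smul_eq_mul]
  ring

theorem det_one_sub_smul_vecMulVec : (1 - c • vecMulVec u u).det = 1 - c * (u ⬝ᵥ u) := by
  have : 1 - c • vecMulVec u u = 1 + replicateCol Unit (-c • u) * replicateRow Unit u := by
    rw [vecMulVec_eq Unit, replicateCol_smul, Matrix.smul_mul, neg_smul, sub_eq_add_neg]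
  rw [this, det_one_add_replicateCol_mul_replicateRow, dotProduct_smul, smul_eq_mul]
  ring

theorem mulVec_eq_self_of_dotProduct_eq_zero {v : n → ℝ} (hv : u ⬝ᵥ v = 0) :
    (1 - c • vecMulVec u u) *ᵥ v = v := by
  rw [one_sub_smul_vecMulVec_mulVec, hv, mul_zero, zero_smul, sub_zero]

theorem mulVec_self_one_sub_smul_vecMulVec :
    (1 - c • vecMulVec u u) *ᵥ u = (1 - c * (u ⬝ᵥ u)) • u := by
  rw [one_sub_smul_vecMulVec_mulVec, sub_smul, one_smul]

theorem exists_mulVec_eq_smul_one_sub_smul_vecMulVec [Nonempty n] :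
    ∃ v ≠ 0, (1 - c • vecMulVec u u) *ᵥ v = (1 - c * (u ⬝ᵥ u)) • v := by
  by_cases hu : u = 0
  · obtain ⟨i⟩ := ‹Nonempty n›
    refine ⟨Pi.single i 1, by simp, ?_⟩
    rw [hu, zero_dotProduct, mul_zero, sub_zero, one_smul]
    exact mulVec_eq_self_of_dotProduct_eq_zero c 0 (zero_dotProduct _)
  · exact ⟨u, hu, mulVec_self_one_sub_smul_vecMulVec c u⟩

variable {c} (v : n → ℝ)

theorem mul_dotProduct_self_le_dotProduct_one_sub_smul_vecMulVec_mulVec (hc : 0 ≤ c) :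
    (1 - c * (u ⬝ᵥ u)) * (v ⬝ᵥ v) ≤ v ⬝ᵥ (1 - c • vecMulVec u u) *ᵥ v := by
  rw [dotProduct_one_sub_smul_vecMulVec_mulVec]
  nlinarith [mul_le_mul_of_nonneg_left (sq_dotProduct_le u v) hc]

theorem dotProduct_one_sub_smul_vecMulVec_mulVec_le (hc : 0 ≤ c) :
    v ⬝ᵥ (1 - c • vecMulVec u u) *ᵥ v ≤ v ⬝ᵥ v := by
  rw [dotProduct_one_sub_smul_vecMulVec_mulVec]
  nlinarith [sq_nonneg (u ⬝ᵥ v)]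

theorem posDef_one_sub_smul_vecMulVec (hc : 0 ≤ c) (hcu : c * (u ⬝ᵥ u) < 1) :
    (1 - c • vecMulVec u u).PosDef := by
  refine .of_dotProduct_mulVec_pos ?_ fun v hv => ?_
  · rw [IsHermitian, conjTranspose_eq_transpose_of_trivial, transpose_one_sub_smul_vecMulVec]
  · rw [star_trivial]
    exact (mul_pos (sub_pos.2 hcu) (by simpa using dotProduct_self_star_pos_iff.2 hv)).trans_le
      (mul_dotProduct_self_le_dotProduct_one_sub_smul_vecMulVec_mulVec u v hc)

theorem exists_mulVec_eq_self_one_sub_smul_vecMulVec [Nontrivial n] :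
    ∃ v ≠ 0, (1 - c • vecMulVec u u) *ᵥ v = (1 : ℝ) • v := by
  obtain ⟨v, hv, hvu⟩ := exists_ne_zero_dotProduct_eq_zero u
  rw [dotProduct_comm] at hvu
  exact ⟨v, hv, by rw [one_smul, mulVec_eq_self_of_dotProduct_eq_zero c u hvu]⟩

end Matrix

theorem KHmat_eq_one_sub_smul_vecMulVec {k : ℝ} (hk : k ≠ 0) (x : ℝ × ℝ) :
    KHmat k x =
      1 - (k ^ 2 + x.1 ^ 2 + x.2 ^ 2)⁻¹ • vecMulVec ![x.1, x.2] ![x.1, x.2] := by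
  have hd : k ^ 2 + x.1 ^ 2 + x.2 ^ 2 ≠ 0 := by positivity
  have hM : !![k ^ 2 + x.2 ^ 2, -(x.1 * x.2); -(x.1 * x.2), k ^ 2 + x.1 ^ 2] =
      (k ^ 2 + x.1 ^ 2 + x.2 ^ 2) • (1 : Matrix (Fin 2) (Fin 2) ℝ) -
        vecMulVec ![x.1, x.2] ![x.1, x.2] := by
    ext i j
    fin_cases i <;> fin_cases j <;> simp [vecMulVec] <;> ring
  rw [KHmat, hM, smul_sub, smul_smul, inv_mul_cancel₀ hd, one_smul]

theorem KHform_self (k : ℝ) (x ζ : ℝ × ℝ) :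
    KHform k x ζ ζ = ![ζ.1, ζ.2] ⬝ᵥ KHmat k x *ᵥ ![ζ.1, ζ.2] := by
  rw [KHform, KHmat, smul_mulVec, dotProduct_smul, smul_eq_mul, vec2_dotProduct]
  simp only [mulVec, of_apply, cons_val', cons_val_zero, cons_val_one, cons_val_fin_one,
    vec2_dotProduct']
  ring

theorem dotProduct_self_vecCons_two (a b : ℝ) : ![a, b] ⬝ᵥ ![a, b] = a ^ 2 + b ^ 2 := by
  rw [vec2_dotProduct', sq, sq]

/-- properties (𝒦1)-(𝒦2): for every `x ∈ ℝ²`, `K_H(x)` is symmetric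
positive definite with eigenvalues `λ₁ = 1` and `λ₂ = k²/(k²+|x|²)`; hence
`det K_H(x) = k²/(k²+|x|²)` and `(k²/(k²+|x|²)) |ζ|² ≤ (K_H(x)ζ|ζ) ≤ |ζ|²`. -/
theorem statement8 (k : ℝ) (hk : 0 < k) (x : ℝ × ℝ) :
    (KHmat k x)ᵀ = KHmat k x ∧
    (KHmat k x).PosDef ∧
    -- λ₁ = 1 is an eigenvalue
    (∃ v : Fin 2 → ℝ, v ≠ 0 ∧ (KHmat k x).mulVec v = (1:ℝ) • v) ∧
    -- λ₂ = k²/(k²+|x|²) is an eigenvalue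
    (∃ v : Fin 2 → ℝ, v ≠ 0 ∧
      (KHmat k x).mulVec v = (k ^ 2 / (k ^ 2 + x.1 ^ 2 + x.2 ^ 2)) • v) ∧
    (KHmat k x).det = k ^ 2 / (k ^ 2 + x.1 ^ 2 + x.2 ^ 2) ∧
    ∀ ζ : ℝ × ℝ,
      (k ^ 2 / (k ^ 2 + x.1 ^ 2 + x.2 ^ 2)) * (ζ.1 ^ 2 + ζ.2 ^ 2) ≤ KHform k x ζ ζ ∧
      KHform k x ζ ζ ≤ ζ.1 ^ 2 + ζ.2 ^ 2 := by
  set d := k ^ 2 + x.1 ^ 2 + x.2 ^ 2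
  set u : Fin 2 → ℝ := ![x.1, x.2]
  have hd : 0 < d := by positivity
  have heig : 1 - d⁻¹ * (u ⬝ᵥ u) = k ^ 2 / d := by
    rw [dotProduct_self_vecCons_two]
    field_simp
    ring
  have hcu : d⁻¹ * (u ⬝ᵥ u) < 1 := by
    rw [← sub_pos, heig]
    positivity
  have hc : 0 ≤ d⁻¹ := inv_nonneg.2 hd.le
  simp only [KHform_self, KHmat_eq_one_sub_smul_vecMulVec hk.ne', ← heig]
  refine ⟨transpose_one_sub_smul_vecMulVec _ u, posDef_one_sub_smul_vecMulVec u hc hcu,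
    exists_mulVec_eq_self_one_sub_smul_vecMulVec u,
    exists_mulVec_eq_smul_one_sub_smul_vecMulVec _ u, det_one_sub_smul_vecMulVec _ u,
    fun ζ => ?_⟩
  rw [← dotProduct_self_vecCons_two]
  exact ⟨mul_dotProduct_self_le_dotProduct_one_sub_smul_vecMulVec_mulVec u _ hc,
    dotProduct_one_sub_smul_vecMulVec_mulVec_le u _ hc⟩
end
end
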